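/- arXiv:2103.17140 — 2 statements merged into one kernel-verified Lean document; each statement's English description precedes it below -/
import Mathlib

section
/- For every integer m ≥ 1, there exists a deeply critical oriented clique on 2·3^m − 1 vertices. -/
/-!
Take `n = 2 * 3 ^ m - 1` and the circulant `C(n, S)` whose connection set `S` consists of the
nonzero residues below `3 ^ m` written with ternary digits `0` and `1` only. Such numbers are
below `n / 4`, and every residue below `3 ^ m` is the sum of two of them; as every nonzero residue
or its negative is below `3 ^ m`, any two vertices are joined by an arc or a directed 2-path, so
`C(n, S)` is an absolute oriented clique. Doubling a nonzero element of `S` produces a ternary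
digit `2`, and `s + t = 2d` in `S` forces `s = t = d`. Hence once the arc `x → x + d` is deleted,
the pairs `{x, x + 2d}` and `{x + d, x - d}` can each be given a single colour, leaving `n - 2`
colours; conversely, two fresh colours for the ends of an arc show `χo` drops by at most `2`.
-/

/-- An oriented graph: a directed graph whose arc relation is irreflexive and
antisymmetric (no loops, and never both arcs `xy` and `yx`). -/
structure OrientedGraph (V : Type) where
  adj : V → V → Prop
  irrefl : ∀ v, ¬ adj v v
  antisymm : ∀ u v, adj u v → ¬ adj v u

namespace OrientedGraph

variable {V : Type}

/-- An oriented `k`-colouring of `G`. -/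
def IsColoring (G : OrientedGraph V) {k : ℕ} (φ : V → Fin k) : Prop :=
  (∀ x y, G.adj x y → φ x ≠ φ y) ∧
  (∀ x y u v, G.adj x y → G.adj u v → φ x = φ v → φ y ≠ φ u)

/-- The oriented chromatic number: the least `k` admitting an oriented `k`-colouring. -/
noncomputable def chromNum (G : OrientedGraph V) : ℕ :=
  sInf {k : ℕ | ∃ φ : V → Fin k, G.IsColoring φ}

/-- `G` with the arc `xy` removed. -/
def deleteArc (G : OrientedGraph V) (x y : V) : OrientedGraph V where
  adj a b := G.adj a b ∧ ¬(a = x ∧ b = y)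
  irrefl v h := G.irrefl v h.1
  antisymm u v h h' := G.antisymm u v h.1 h'.1

/-- An absolute oriented clique: `χo(G) = |V(G)|`. -/
def IsAbsoluteClique (G : OrientedGraph V) : Prop :=
  G.chromNum = Nat.card V

/-- A deeply critical oriented graph: removing any arc drops `χo` by exactly 2. -/
def IsDeeplyCritical (G : OrientedGraph V) : Prop :=
  ∀ x y, G.adj x y → (G.deleteArc x y).chromNum = G.chromNum - 2

/-- A deeply critical oriented clique. -/
def IsDeeplyCriticalClique (G : OrientedGraph V) : Prop :=
  G.IsDeeplyCritical ∧ G.IsAbsoluteClique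

/-- An extending partition `X 0 ⊔ X 1 ⊔ X 2` of `G` (indices mod 3). -/
def IsExtendingPartition (G : OrientedGraph V) (X : Fin 3 → Set V) : Prop :=
  (∀ v : V, ∃! i : Fin 3, v ∈ X i) ∧
  (∀ i : Fin 3, ∀ u ∈ X (i + 1), ∀ v ∈ X i, ¬ G.adj u v) ∧
  (∀ i : Fin 3, ∀ u ∈ X i, ∃ v ∈ X (i + 1), {w | w ∈ X i ∧ G.adj w v} = {u}) ∧
  (∀ i : Fin 3, ∀ v ∈ X (i + 1), ∃ u ∈ X i, {w | w ∈ X (i + 1) ∧ G.adj u w} = {v})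

/-- An oriented graph is extendable when it admits an extending partition. -/
def Extendable (G : OrientedGraph V) : Prop :=
  ∃ X : Fin 3 → Set V, G.IsExtendingPartition X

/-- Induced subgraph on the vertices satisfying `P`. -/
def induce (G : OrientedGraph V) (P : V → Prop) : OrientedGraph {v // P v} where
  adj a b := G.adj a.1 b.1
  irrefl a := G.irrefl a.1
  antisymm a b h := G.antisymm a.1 b.1 h

end OrientedGraph

/-- The new vertex `xᵢ⁻` of the 6-extension (for `i ∈ Fin 3`, representing `X_{i+1}`). -/
abbrev xminus (i : Fin 3) : Fin 6 := ⟨2 * i.1, by omega⟩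

/-- The new vertex `xᵢ⁺` of the 6-extension. -/
abbrev xplus (i : Fin 3) : Fin 6 := ⟨2 * i.1 + 1, by omega⟩

/-- The arcs among the six new vertices:
`x₁⁻x₂⁺, x₁⁺x₂⁻, x₂⁻x₃⁺, x₂⁺x₃⁻, x₃⁻x₁⁺, x₃⁺x₁⁻`. -/
abbrev extraAdj (s t : Fin 6) : Prop :=
  ∃ i : Fin 3, (s = xminus i ∧ t = xplus (i + 1)) ∨ (s = xplus i ∧ t = xminus (i + 1))

lemma extra_irrefl : ∀ s : Fin 6, ¬ extraAdj s s := by decide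

lemma extra_antisymm : ∀ s t : Fin 6, extraAdj s t → ¬ extraAdj t s := by decide

/-- The 6-extension of `G` with respect to the partition `X`. -/
def sixExtension {V : Type} (G : OrientedGraph V) (X : Fin 3 → Set V) :
    OrientedGraph (V ⊕ Fin 6) where
  adj a b :=
    match a, b with
    | Sum.inl u, Sum.inl v => G.adj u v
    | Sum.inr s, Sum.inl v => ∃ i : Fin 3, s = xminus i ∧ v ∈ X i
    | Sum.inl u, Sum.inr s => ∃ i : Fin 3, s = xplus i ∧ u ∈ X i
    | Sum.inr s, Sum.inr t => extraAdj s t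
  irrefl v := by
    cases v with
    | inl u => exact G.irrefl u
    | inr s => exact extra_irrefl s
  antisymm a b h h' := by
    cases a with
    | inl u =>
      cases b with
      | inl v => exact G.antisymm u v h h'
      | inr s =>
        obtain ⟨i, hi, -⟩ := h
        obtain ⟨j, hj, -⟩ := h'
        have := congrArg Fin.val (hi.symm.trans hj)
        simp at this
        omega
    | inr s =>
      cases b with
      | inl v =>
        obtain ⟨i, hi, -⟩ := h
        obtain ⟨j, hj, -⟩ := h'
        have := congrArg Fin.val (hi.symm.trans hj)
        simp at this
        omega
      | inr t => exact extra_antisymm s t h h'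

/-- The 4-extension of `G`: the subgraph of the 6-extension induced by deleting
`x₁⁺` and `x₂⁻`. -/
def fourExtension {V : Type} (G : OrientedGraph V) (X : Fin 3 → Set V) :
    OrientedGraph {v : V ⊕ Fin 6 // v ≠ Sum.inr (xplus 0) ∧ v ≠ Sum.inr (xminus 1)} :=
  (sixExtension G X).induce _

/-- The 2-extension of `G`: the subgraph of the 6-extension induced by deleting
`x₁⁻`, `x₂⁺`, `x₃⁻` and `x₃⁺`. -/
def twoExtension {V : Type} (G : OrientedGraph V) (X : Fin 3 → Set V) :
    OrientedGraph {v : V ⊕ Fin 6 //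
      v ≠ Sum.inr (xminus 0) ∧ v ≠ Sum.inr (xplus 1) ∧
      v ≠ Sum.inr (xminus 2) ∧ v ≠ Sum.inr (xplus 2)} :=
  (sixExtension G X).induce _

/-- The oriented circulant graph `C(n, S)`: vertex set `ZMod n`, with an arc from `i`
to `j` whenever `j - i ∈ S`. -/
def circulant (n : ℕ) (S : Set (ZMod n)) (hS : ∀ k : ZMod n, k ∈ S → -k ∉ S) :
    OrientedGraph (ZMod n) where
  adj i j := j - i ∈ S
  irrefl i h := hS (i - i) h (by simpa using h)
  antisymm i j h h' := hS (j - i) h (by simpa [neg_sub] using h')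


def TernaryZeroOne (j : ℕ) : Prop := ∀ i ∈ Nat.digits 3 j, i ≤ 1

lemma ternaryZeroOne_iff {j : ℕ} : TernaryZeroOne j ↔ j % 3 ≤ 1 ∧ TernaryZeroOne (j / 3) := by
  rcases Nat.eq_zero_or_pos j with rfl | hj
  · simp [TernaryZeroOne]
  · simp [TernaryZeroOne, Nat.digits_def' (by norm_num : 1 < 3) hj]

lemma ternaryZeroOne_three_mul_add {a r : ℕ} (ha : TernaryZeroOne a) (hr : r ≤ 1) :
    TernaryZeroOne (3 * a + r) :=
  ternaryZeroOne_iff.2 ⟨by omega, by rwa [show (3 * a + r) / 3 = a by omega]⟩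

namespace TernaryZeroOne

lemma two_mul_lt {m j : ℕ} (hj : TernaryZeroOne j) (hlt : j < 3 ^ m) : 2 * j < 3 ^ m := by
  induction m generalizing j with
  | zero => simp_all
  | succ m ih =>
    have hdiv := ih (ternaryZeroOne_iff.1 hj).2 (by rw [pow_succ] at hlt; omega)
    have hmod := (ternaryZeroOne_iff.1 hj).1
    rw [pow_succ]
    omega

lemma not_two_mul {j : ℕ} (hj : TernaryZeroOne j) (hpos : 0 < j) : ¬ TernaryZeroOne (2 * j) := by
  induction j using Nat.strong_induction_on with
  | _ j ih =>
    intro h2j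
    obtain ⟨hmod, hdiv⟩ := ternaryZeroOne_iff.1 hj
    obtain ⟨hmod2, hdiv2⟩ := ternaryZeroOne_iff.1 h2j
    -- the lowest nonzero ternary digit of `j` is `1`, so that of `2 * j` is `2`
    have hj3 : j % 3 = 0 := by omega
    rw [show 2 * j / 3 = 2 * (j / 3) by omega] at hdiv2
    exact ih (j / 3) (by omega) hdiv (by omega) hdiv2

lemma eq_of_add_eq_two_mul {a b c : ℕ} (ha : TernaryZeroOne a) (hb : TernaryZeroOne b)
    (hc : TernaryZeroOne c) (h : a + b = 2 * c) : a = c := by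
  induction c using Nat.strong_induction_on generalizing a b with
  | _ c ih =>
    rcases Nat.eq_zero_or_pos c with rfl | hc0
    · omega
    obtain ⟨ha₁, ha₂⟩ := ternaryZeroOne_iff.1 ha
    obtain ⟨hb₁, hb₂⟩ := ternaryZeroOne_iff.1 hb
    obtain ⟨hc₁, hc₂⟩ := ternaryZeroOne_iff.1 hc
    -- no carry occurs in the last digit, so `a`, `b`, `c` share it
    have hlast : a % 3 = c % 3 ∧ b % 3 = c % 3 := by omega
    have := ih (c / 3) (by omega) ha₂ hb₂ hc₂ (by omega)
    omega

end TernaryZeroOne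

lemma exists_ternaryZeroOne_add_eq {m j : ℕ} (hj : j < 3 ^ m) :
    ∃ a b, TernaryZeroOne a ∧ TernaryZeroOne b ∧ a < 3 ^ m ∧ b < 3 ^ m ∧ a + b = j := by
  induction m generalizing j with
  | zero =>
    have h0 : TernaryZeroOne 0 := by simp [TernaryZeroOne]
    exact ⟨0, 0, h0, h0, by simp, by simp, by simp_all⟩
  | succ m ih =>
    rw [pow_succ] at hj ⊢
    obtain ⟨a, b, ha, hb, hab, hbb, hsum⟩ := ih (j := j / 3) (by omega)
    refine ⟨3 * a + min (j % 3) 1, 3 * b + (j % 3 - min (j % 3) 1),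
      ternaryZeroOne_three_mul_add ha (by omega), ternaryZeroOne_three_mul_add hb (by omega),
      by omega, by omega, by omega⟩

namespace OrientedGraph

variable {V : Type} {G : OrientedGraph V}

def IsColoringMap (G : OrientedGraph V) {W : Type} (ψ : V → W) : Prop :=
  (∀ x y, G.adj x y → ψ x ≠ ψ y) ∧
  (∀ x y u v, G.adj x y → G.adj u v → ψ x = ψ v → ψ y ≠ ψ u)

def IsNear (G : OrientedGraph V) (u v : V) : Prop :=
  G.adj u v ∨ G.adj v u ∨ (∃ w, G.adj u w ∧ G.adj w v) ∨ ∃ w, G.adj v w ∧ G.adj w u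

def IsMergeable (G : OrientedGraph V) (A : Set V) : Prop :=
  ∀ a ∈ A, ∀ b ∈ A, ¬ G.IsNear a b

lemma IsNear.symm {u v : V} (h : G.IsNear u v) : G.IsNear v u := by
  rcases h with h | h | h | h
  exacts [Or.inr (Or.inl h), Or.inl h, Or.inr (Or.inr (Or.inr h)), Or.inr (Or.inr (Or.inl h))]

lemma not_isNear_self (v : V) : ¬ G.IsNear v v := by
  rintro (h | h | ⟨w, h₁, h₂⟩ | ⟨w, h₁, h₂⟩)
  exacts [G.irrefl v h, G.irrefl v h, G.antisymm v w h₁ h₂, G.antisymm v w h₁ h₂]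

lemma isMergeable_pair {a b : V} (h : ¬ G.IsNear a b) : G.IsMergeable {a, b} := by
  rintro u (rfl | rfl) v (rfl | rfl)
  exacts [not_isNear_self _, h, fun h' => h h'.symm, not_isNear_self _]

lemma isColoringMap_id : G.IsColoringMap id := by
  refine ⟨fun x y hxy hxy' => ?_, fun x y u v hxy huv hxv hyu => ?_⟩
  · obtain rfl : x = y := hxy'
    exact G.irrefl x hxy
  · subst hxv hyu
    exact G.antisymm _ _ hxy huv

lemma isColoringMap_comp_iff {W W' : Type} {ψ : V → W} {f : W → W'} (hf : Function.Injective f) :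
    G.IsColoringMap (f ∘ ψ) ↔ G.IsColoringMap ψ := by
  simp only [IsColoringMap, Function.comp_apply, hf.eq_iff, hf.ne_iff]

lemma IsColoringMap.ne_of_isNear {W : Type} {ψ : V → W} (hψ : G.IsColoringMap ψ) {u v : V}
    (h : G.IsNear u v) : ψ u ≠ ψ v := by
  rcases h with h | h | ⟨w, h₁, h₂⟩ | ⟨w, h₁, h₂⟩
  · exact hψ.1 _ _ h
  · exact (hψ.1 _ _ h).symm
  · exact fun e => hψ.2 u w w v h₁ h₂ e rfl
  · exact fun e => hψ.2 v w w u h₁ h₂ e.symm rfl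

lemma IsColoringMap.chromNum_le {W : Type} {ψ : V → W} (hψ : G.IsColoringMap ψ) {T : Finset W}
    (hT : ∀ v, ψ v ∈ T) : G.chromNum ≤ T.card := by
  obtain ⟨e⟩ := Function.Embedding.nonempty_of_card_le (α := T) (β := Fin T.card) (by simp)
  refine Nat.sInf_le ⟨e ∘ fun v => ⟨ψ v, hT v⟩, ?_⟩
  exact (isColoringMap_comp_iff e.injective).2 ((isColoringMap_comp_iff Subtype.val_injective).1 hψ)

lemma chromNum_le_card [Fintype V] : G.chromNum ≤ Fintype.card V := by
  simpa using isColoringMap_id.chromNum_le (G := G) (T := Finset.univ) (by simp)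

lemma exists_isColoring_chromNum [Fintype V] : ∃ φ : V → Fin G.chromNum, G.IsColoring φ :=
  Nat.sInf_mem (s := {k | ∃ φ : V → Fin k, G.IsColoring φ})
    ⟨_, _, (isColoringMap_comp_iff (Fintype.equivFin V).injective).2 isColoringMap_id⟩

lemma isAbsoluteClique_of_isNear [Fintype V] (h : ∀ u v, u ≠ v → G.IsNear u v) :
    G.IsAbsoluteClique := by
  obtain ⟨φ, hφ⟩ := G.exists_isColoring_chromNum
  have hinj : Function.Injective φ := fun u v huv => by
    by_contra hne
    exact IsColoringMap.ne_of_isNear hφ (h u v hne) huv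
  have := Fintype.card_le_of_injective φ hinj
  rw [IsAbsoluteClique, Nat.card_eq_fintype_card]
  exact le_antisymm chromNum_le_card (by simpa using this)

lemma chromNum_le_deleteArc_add_two [Fintype V] (x y : V) :
    G.chromNum ≤ (G.deleteArc x y).chromNum + 2 := by
  classical
  obtain ⟨φ, hφ⟩ := (G.deleteArc x y).exists_isColoring_chromNum
  let ψ : V → Fin (G.deleteArc x y).chromNum ⊕ Bool := fun v =>
    if v = x then .inr true else if v = y then .inr false else .inl (φ v)
  have hfib : ∀ a b, ψ a = ψ b → a = b ∨ (a ≠ x ∧ a ≠ y ∧ b ≠ x ∧ b ≠ y ∧ φ a = φ b) := by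
    intro a b
    simp only [ψ]
    split_ifs <;> simp_all
  have hψ : G.IsColoringMap ψ := by
    refine ⟨fun a b hab hψab => ?_, fun a b c d hab hcd had hbc => ?_⟩
    · rcases hfib a b hψab with rfl | ⟨ha, -, -, -, hφab⟩
      · exact G.irrefl a hab
      · exact hφ.1 a b ⟨hab, fun h => ha h.1⟩ hφab
    · rcases hfib a d had with rfl | ⟨ha, -, -, hd, hφad⟩ <;>
        rcases hfib b c hbc with rfl | ⟨-, hb, hc, -, hφbc⟩
      · exact G.antisymm a b hab hcd
      · exact hφ.2 a b c a ⟨hab, fun h => hb h.2⟩ ⟨hcd, fun h => hc h.1⟩ rfl hφbc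
      · exact hφ.2 a b b d ⟨hab, fun h => ha h.1⟩ ⟨hcd, fun h => hd h.2⟩ hφad rfl
      · exact hφ.2 a b c d ⟨hab, fun h => ha h.1⟩ ⟨hcd, fun h => hc h.1⟩ hφad hφbc
  simpa using hψ.chromNum_le (T := Finset.univ) (by simp)

lemma isColoringMap_of_fibers {W : Type} {ψ : V → W} {A B : Set V} (hA : G.IsMergeable A)
    (hB : G.IsMergeable B) (hAB : ∀ a ∈ A, ∀ b ∈ B, ¬ G.adj a b)
    (hfib : ∀ a b, ψ a = ψ b → a = b ∨ (a ∈ A ∧ b ∈ A) ∨ (a ∈ B ∧ b ∈ B)) :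
    G.IsColoringMap ψ := by
  refine ⟨fun a b hab hψab => ?_, fun a b c d hab hcd had hbc => ?_⟩
  · rcases hfib a b hψab with rfl | ⟨ha, hb⟩ | ⟨ha, hb⟩
    · exact G.irrefl a hab
    · exact hA a ha b hb (Or.inl hab)
    · exact hB a ha b hb (Or.inl hab)
  · rcases hfib a d had with rfl | ⟨ha, hd⟩ | ⟨ha, hd⟩ <;>
      rcases hfib b c hbc with rfl | ⟨hb, hc⟩ | ⟨hb, hc⟩
    · exact G.antisymm a b hab hcd
    · exact hA c hc b hb (Or.inr (Or.inr (Or.inl ⟨a, hcd, hab⟩)))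
    · exact hB c hc b hb (Or.inr (Or.inr (Or.inl ⟨a, hcd, hab⟩)))
    · exact hA a ha d hd (Or.inr (Or.inr (Or.inl ⟨b, hab, hcd⟩)))
    · exact hA a ha b hb (Or.inl hab)
    · exact hAB a ha b hb hab
    · exact hB a ha d hd (Or.inr (Or.inr (Or.inl ⟨b, hab, hcd⟩)))
    · exact hAB c hc d hd hcd
    · exact hB a ha b hb (Or.inl hab)

lemma chromNum_add_card_add_card_le [Fintype V] [DecidableEq V] {A B : Finset V}
    (hA : G.IsMergeable A) (hB : G.IsMergeable B) (hAB : ∀ a ∈ A, ∀ b ∈ B, ¬ G.adj a b)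
    (hdisj : Disjoint A B) {a₀ b₀ : V} (ha₀ : a₀ ∈ A) (hb₀ : b₀ ∈ B) :
    G.chromNum + A.card + B.card ≤ Fintype.card V + 2 := by
  let ψ : V → V := fun v => if v ∈ A then a₀ else if v ∈ B then b₀ else v
  have hb₀A : b₀ ∉ A := Finset.disjoint_right.1 hdisj hb₀
  have hfib : ∀ a b, ψ a = ψ b → a = b ∨ (a ∈ A ∧ b ∈ A) ∨ (a ∈ B ∧ b ∈ B) := by
    intro a b
    simp only [ψ]
    split_ifs <;> aesop
  have hψ := (isColoringMap_of_fibers hA hB hAB hfib).chromNum_le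
    (T := insert a₀ (insert b₀ (A ∪ B)ᶜ)) (fun v => by simp only [ψ]; split_ifs <;> simp_all)
  have hcard : (insert a₀ (insert b₀ (A ∪ B)ᶜ)).card ≤ (A ∪ B)ᶜ.card + 2 :=
    (Finset.card_insert_le _ _).trans (by simpa using Finset.card_insert_le _ _)
  rw [Finset.card_compl, Finset.card_union_of_disjoint hdisj] at hcard
  have := (A ∪ B).card_le_univ
  rw [Finset.card_union_of_disjoint hdisj] at this
  omega

lemma isDeeplyCriticalClique_of_isNear [Fintype V] (hnear : ∀ u v, u ≠ v → G.IsNear u v)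
    (hdel : ∀ x y, G.adj x y → (G.deleteArc x y).chromNum + 2 ≤ Fintype.card V) :
    G.IsDeeplyCriticalClique := by
  have hclique := isAbsoluteClique_of_isNear hnear
  refine ⟨fun x y hxy => ?_, hclique⟩
  have := chromNum_le_deleteArc_add_two (G := G) x y
  rw [IsAbsoluteClique, Nat.card_eq_fintype_card] at hclique
  have := hdel x y hxy
  omega

end OrientedGraph

def ternarySet (m n : ℕ) : Set (ZMod n) :=
  {z | z.val ≠ 0 ∧ z.val < 3 ^ m ∧ TernaryZeroOne z.val}

namespace TernaryCirculant

open OrientedGraph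

variable {m n : ℕ}

lemma two_mul_val_lt_of_mem {z : ZMod n} (hz : z ∈ ternarySet m n) : 2 * z.val < 3 ^ m :=
  hz.2.2.two_mul_lt hz.2.1

lemma three_pow_le (hn : n + 1 = 2 * 3 ^ m) : 3 ^ m ≤ n := by
  have := Nat.one_le_pow m 3 (by norm_num)
  omega

-- Representatives of elements of `ternarySet m n` are at most `(n - 1) / 4`, so these sums do not
-- wrap around.
lemma list_sum_ne_zero [NeZero n] (hn : n + 1 = 2 * 3 ^ m) {l : List (ZMod n)}
    (hl : ∀ z ∈ l, z ∈ ternarySet m n) (hne : l ≠ []) (hlen : l.length ≤ 4) : l.sum ≠ 0 := by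
  have hcast : ((l.map ZMod.val).sum : ZMod n) = l.sum := by
    simp [Nat.cast_list_sum, Function.comp_def]
  have hpos : 0 < (l.map ZMod.val).sum :=
    List.sum_pos _ (by simpa using fun z hz => Nat.pos_of_ne_zero (hl z hz).1) (by simpa using hne)
  have hle : (l.map ZMod.val).sum ≤ (l.map ZMod.val).length • ((3 ^ m - 1) / 2) :=
    List.sum_le_card_nsmul _ _ (by
      simp only [List.mem_map]
      rintro _ ⟨z, hz, rfl⟩
      have := two_mul_val_lt_of_mem (hl z hz)
      omega)
  rw [← hcast, Ne, ZMod.natCast_eq_zero_iff]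
  rw [List.length_map, smul_eq_mul] at hle
  have : l.length * ((3 ^ m - 1) / 2) ≤ 4 * ((3 ^ m - 1) / 2) := Nat.mul_le_mul_right _ hlen
  exact fun hdvd => absurd (Nat.le_of_dvd hpos hdvd) (by omega)

lemma neg_not_mem_ternarySet [NeZero n] (hn : n + 1 = 2 * 3 ^ m) {z : ZMod n}
    (hz : z ∈ ternarySet m n) : -z ∉ ternarySet m n := fun h =>
  list_sum_ne_zero hn (l := [z, -z]) (by simp [hz, h]) (by simp) (by simp) (by simp)

lemma val_add_of_mem (hn : n + 1 = 2 * 3 ^ m) {s t : ZMod n} (hs : s ∈ ternarySet m n)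
    (ht : t ∈ ternarySet m n) : (s + t).val = s.val + t.val := by
  have := two_mul_val_lt_of_mem hs
  have := two_mul_val_lt_of_mem ht
  have := three_pow_le hn
  exact ZMod.val_add_of_lt (by omega)

lemma two_mul_not_mem (hn : n + 1 = 2 * 3 ^ m) {d : ZMod n} (hd : d ∈ ternarySet m n) :
    2 * d ∉ ternarySet m n := fun h => by
  have := h.2.2
  rw [two_mul, val_add_of_mem hn hd hd, ← two_mul] at this
  exact hd.2.2.not_two_mul (Nat.pos_of_ne_zero hd.1) this

lemma eq_of_add_eq_two_mul [NeZero n] (hn : n + 1 = 2 * 3 ^ m) {s t d : ZMod n}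
    (hs : s ∈ ternarySet m n) (ht : t ∈ ternarySet m n) (hd : d ∈ ternarySet m n)
    (h : s + t = 2 * d) : s = d := by
  have hval := congrArg ZMod.val h
  rw [val_add_of_mem hn hs ht, two_mul, val_add_of_mem hn hd hd, ← two_mul] at hval
  exact ZMod.val_injective n (hs.2.2.eq_of_add_eq_two_mul ht.2.2 hd.2.2 hval)

lemma mem_or_exists_add_eq [NeZero n] (hn : n + 1 = 2 * 3 ^ m) {z : ZMod n} (hz : z ≠ 0)
    (hlt : z.val < 3 ^ m) :
    z ∈ ternarySet m n ∨ ∃ s ∈ ternarySet m n, ∃ t ∈ ternarySet m n, s + t = z := by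
  obtain ⟨a, b, ha, hb, hab, hbb, hsum⟩ := exists_ternaryZeroOne_add_eq hlt
  have hz' : z.val ≠ 0 := (ZMod.val_ne_zero z).2 hz
  have hn' := three_pow_le hn
  rcases Nat.eq_zero_or_pos a with rfl | ha0
  · exact Or.inl ⟨hz', hlt, by rwa [← hsum, zero_add]⟩
  rcases Nat.eq_zero_or_pos b with rfl | hb0
  · exact Or.inl ⟨hz', hlt, by rwa [← hsum, add_zero]⟩
  have hmem : ∀ c, TernaryZeroOne c → 0 < c → c < 3 ^ m → (c : ZMod n) ∈ ternarySet m n := by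
    intro c hc hc0 hcm
    rw [ternarySet, Set.mem_ofPred_eq, ZMod.val_cast_of_lt (by omega)]
    exact ⟨by omega, hcm, hc⟩
  refine Or.inr ⟨a, hmem a ha ha0 hab, b, hmem b hb hb0 hbb, ?_⟩
  rw [← Nat.cast_add, hsum, ZMod.natCast_zmod_val]

def ternaryCirculant [NeZero n] (hn : n + 1 = 2 * 3 ^ m) : OrientedGraph (ZMod n) :=
  circulant n (ternarySet m n) fun _ => neg_not_mem_ternarySet hn

lemma ternaryCirculant_adj [NeZero n] (hn : n + 1 = 2 * 3 ^ m) {u v : ZMod n} :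
    (ternaryCirculant hn).adj u v ↔ v - u ∈ ternarySet m n := Iff.rfl

section Deletion

variable [NeZero n] {d : ZMod n}

lemma two_mul_ne_zero_of_mem (hn : n + 1 = 2 * 3 ^ m) (hd : d ∈ ternarySet m n) : 2 * d ≠ 0 :=
  fun h => list_sum_ne_zero hn (l := [d, d]) (by simp [hd]) (by simp) (by simp)
    (by simp only [List.sum_cons, List.sum_nil]; linear_combination h)

lemma three_mul_ne_zero_of_mem (hn : n + 1 = 2 * 3 ^ m) (hd : d ∈ ternarySet m n) : 3 * d ≠ 0 :=
  fun h => list_sum_ne_zero hn (l := [d, d, d]) (by simp [hd]) (by simp) (by simp)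
    (by simp only [List.sum_cons, List.sum_nil]; linear_combination h)

lemma neg_two_mul_not_mem (hn : n + 1 = 2 * 3 ^ m) (hd : d ∈ ternarySet m n) :
    -(2 * d) ∉ ternarySet m n := fun h =>
  list_sum_ne_zero hn (l := [-(2 * d), d, d]) (by simp [hd, h]) (by simp) (by simp)
    (by simp only [List.sum_cons, List.sum_nil]; ring)

lemma neg_three_mul_not_mem (hn : n + 1 = 2 * 3 ^ m) (hd : d ∈ ternarySet m n) :
    -(3 * d) ∉ ternarySet m n := fun h =>
  list_sum_ne_zero hn (l := [-(3 * d), d, d, d]) (by simp [hd, h]) (by simp) (by simp)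
    (by simp only [List.sum_cons, List.sum_nil]; ring)

lemma add_ne_neg_two_mul (hn : n + 1 = 2 * 3 ^ m) (hd : d ∈ ternarySet m n) {s t : ZMod n}
    (hs : s ∈ ternarySet m n) (ht : t ∈ ternarySet m n) : s + t ≠ -(2 * d) := fun h =>
  list_sum_ne_zero hn (l := [s, t, d, d]) (by simp [hd, hs, ht]) (by simp) (by simp)
    (by simp only [List.sum_cons, List.sum_nil]; linear_combination h)

lemma not_isNear_add_two_mul (hn : n + 1 = 2 * 3 ^ m) (hd : d ∈ ternarySet m n) (x : ZMod n) :
    ¬ ((ternaryCirculant hn).deleteArc x (x + d)).IsNear x (x + 2 * d) := by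
  simp only [IsNear, deleteArc, ternaryCirculant_adj, true_and]
  rintro (⟨h, -⟩ | ⟨h, -⟩ | ⟨w, ⟨h₁, hw⟩, ⟨h₂, -⟩⟩ | ⟨w, ⟨h₁, -⟩, ⟨h₂, -⟩⟩)
  · exact two_mul_not_mem hn hd (by convert h using 1; ring)
  · exact neg_two_mul_not_mem hn hd (by convert h using 1; ring)
  · -- the only directed 2-path from `x` to `x + 2 * d` passes through the deleted arc
    have := eq_of_add_eq_two_mul hn h₁ h₂ hd (by ring)
    exact hw (by linear_combination this)
  · exact add_ne_neg_two_mul hn hd h₁ h₂ (by ring)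

lemma not_isNear_add_sub (hn : n + 1 = 2 * 3 ^ m) (hd : d ∈ ternarySet m n) (x : ZMod n) :
    ¬ ((ternaryCirculant hn).deleteArc x (x + d)).IsNear (x + d) (x - d) := by
  simp only [IsNear, deleteArc, ternaryCirculant_adj, and_true]
  rintro (⟨h, -⟩ | ⟨h, -⟩ | ⟨w, ⟨h₁, -⟩, ⟨h₂, -⟩⟩ | ⟨w, ⟨h₁, -⟩, ⟨h₂, hw⟩⟩)
  · exact neg_two_mul_not_mem hn hd (by convert h using 1; ring)
  · exact two_mul_not_mem hn hd (by convert h using 1; ring)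
  · exact add_ne_neg_two_mul hn hd h₁ h₂ (by ring)
  · have := eq_of_add_eq_two_mul hn h₁ h₂ hd (by ring)
    exact hw (by linear_combination this)

lemma not_adj_of_mem_pairs (hn : n + 1 = 2 * 3 ^ m) (hd : d ∈ ternarySet m n) (x : ZMod n)
    {a b : ZMod n} (ha : a ∈ ({x, x + 2 * d} : Finset (ZMod n)))
    (hb : b ∈ ({x + d, x - d} : Finset (ZMod n))) :
    ¬ ((ternaryCirculant hn).deleteArc x (x + d)).adj a b := by
  simp only [Finset.mem_insert, Finset.mem_singleton] at ha hb
  simp only [deleteArc, ternaryCirculant_adj]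
  rintro ⟨h, hxy⟩
  rcases ha with rfl | rfl <;> rcases hb with rfl | rfl
  · exact hxy ⟨rfl, rfl⟩
  · exact neg_not_mem_ternarySet hn hd (by convert h using 1; ring)
  · exact neg_not_mem_ternarySet hn hd (by convert h using 1; ring)
  · exact neg_three_mul_not_mem hn hd (by convert h using 1; ring)

lemma chromNum_deleteArc_add_two_le (hn : n + 1 = 2 * 3 ^ m) (hd : d ∈ ternarySet m n)
    (x : ZMod n) : ((ternaryCirculant hn).deleteArc x (x + d)).chromNum + 2 ≤ n := by
  have hd0 : d ≠ 0 := fun h => hd.1 (by simp [h])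
  have h2d := two_mul_ne_zero_of_mem hn hd
  have h3d := three_mul_ne_zero_of_mem hn hd
  have hA : ({x, x + 2 * d} : Finset (ZMod n)).card = 2 :=
    Finset.card_pair fun h => h2d (by linear_combination -h)
  have hB : ({x + d, x - d} : Finset (ZMod n)).card = 2 :=
    Finset.card_pair fun h => h2d (by linear_combination h)
  have hdisj : Disjoint ({x, x + 2 * d} : Finset (ZMod n)) {x + d, x - d} := by
    simp only [Finset.disjoint_insert_left, Finset.disjoint_singleton_left, Finset.mem_insert,
      Finset.mem_singleton, not_or]
    exact ⟨⟨fun h => hd0 (by linear_combination -h), fun h => hd0 (by linear_combination h)⟩,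
      fun h => hd0 (by linear_combination h), fun h => h3d (by linear_combination h)⟩
  have := chromNum_add_card_add_card_le
    (by rw [Finset.coe_pair]; exact isMergeable_pair (not_isNear_add_two_mul hn hd x))
    (by rw [Finset.coe_pair]; exact isMergeable_pair (not_isNear_add_sub hn hd x))
    (fun _ ha _ hb => not_adj_of_mem_pairs hn hd x ha hb) hdisj
    (Finset.mem_insert_self _ _) (Finset.mem_insert_self _ _)
  rw [hA, hB, ZMod.card] at this
  omega

end Deletion

lemma ternaryCirculant_isNear [NeZero n] (hn : n + 1 = 2 * 3 ^ m) {u v : ZMod n} (huv : u ≠ v) :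
    (ternaryCirculant hn).IsNear u v := by
  have hnear : ∀ u v : ZMod n, v - u ≠ 0 → (v - u).val < 3 ^ m →
      (ternaryCirculant hn).IsNear u v := by
    intro u v hne hlt
    rcases mem_or_exists_add_eq hn hne hlt with h | ⟨s, hs, t, ht, hst⟩
    · exact Or.inl h
    · refine Or.inr (Or.inr (Or.inl ⟨u + s, ?_, ?_⟩)) <;> rw [ternaryCirculant_adj]
      · simpa using hs
      · convert ht using 1
        linear_combination -hst
  have hne : v - u ≠ 0 := sub_ne_zero.2 huv.symm
  by_cases hlt : (v - u).val < 3 ^ m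
  · exact hnear u v hne hlt
  · refine (hnear v u (sub_ne_zero.2 huv) ?_).symm
    have := ZMod.val_lt (v - u)
    rw [← neg_sub, ZMod.neg_val, if_neg hne]
    omega

theorem ternaryCirculant_isDeeplyCriticalClique [NeZero n] (hn : n + 1 = 2 * 3 ^ m) :
    (ternaryCirculant hn).IsDeeplyCriticalClique := by
  refine isDeeplyCriticalClique_of_isNear (fun u v => ternaryCirculant_isNear hn) fun x y hxy => ?_
  rw [ZMod.card]
  simpa using chromNum_deleteArc_add_two_le hn (d := y - x) hxy x

end TernaryCirculant

theorem stmt18_general (m : ℕ) :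
    ∃ G : OrientedGraph (Fin (2 * 3 ^ m - 1)), G.IsDeeplyCriticalClique := by
  have hpow := Nat.one_le_pow m 3 (by norm_num)
  obtain ⟨k, hk⟩ : ∃ k, 2 * 3 ^ m - 1 = k + 1 := ⟨2 * 3 ^ m - 2, by omega⟩
  rw [hk]
  have hn : k + 1 + 1 = 2 * 3 ^ m := by omega
  -- `ZMod (k + 1)` is `Fin (k + 1)` by definition
  exact ⟨_, TernaryCirculant.ternaryCirculant_isDeeplyCriticalClique hn⟩

/-- for every `m ≥ 1` there is a deeply critical oriented clique on
`2 * 3 ^ m - 1` vertices. -/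
theorem stmt18 (m : ℕ) (hm : 1 ≤ m) :
    ∃ G : OrientedGraph (Fin (2 * 3 ^ m - 1)), G.IsDeeplyCriticalClique :=
  stmt18_general m
end

section
/- Let n ≥ 1 be even and let S ⊆ Z_n be such that no k ∈ Z_n satisfies both k ∈ S and −k ∈ S. If the oriented circulant graph C(n,S) is an absolute oriented clique, then n/2 ∉ S and there exist x, y ∈ S with x + y ≡ n/2 (mod n) or x + y ≡ −n/2 (mod n). -/
namespace OrientedGraph

variable {V : Type}

def WeakDistLeTwo (G : OrientedGraph V) (u v : V) : Prop :=
  G.adj u v ∨ G.adj v u ∨ ∃ w, (G.adj u w ∧ G.adj w v) ∨ (G.adj v w ∧ G.adj w u)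

variable {G : OrientedGraph V}

lemma chromNum_le_of_isColoring {k : ℕ} {φ : V → Fin k} (hφ : G.IsColoring φ) :
    G.chromNum ≤ k :=
  Nat.sInf_le ⟨φ, hφ⟩

lemma isColoring_of_not_weakDistLeTwo {k : ℕ} {φ : V → Fin k} {u v : V}
    (huv : ¬ G.WeakDistLeTwo u v)
    (hφ : ∀ a b, φ a = φ b → a = b ∨ (a = u ∧ b = v) ∨ (a = v ∧ b = u)) :
    G.IsColoring φ := by
  simp only [WeakDistLeTwo, not_or, not_exists] at huv
  obtain ⟨huv, hvu, hpath⟩ := huv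
  refine ⟨fun x y hxy hφxy => ?_, fun x y a b hxy hab hxb hya => ?_⟩
  · rcases hφ x y hφxy with rfl | ⟨rfl, rfl⟩ | ⟨rfl, rfl⟩
    exacts [G.irrefl x hxy, huv hxy, hvu hxy]
  · rcases hφ x b hxb with rfl | ⟨rfl, rfl⟩ | ⟨rfl, rfl⟩ <;>
      rcases hφ y a hya with rfl | ⟨rfl, rfl⟩ | ⟨rfl, rfl⟩
    -- each coincidence yields a loop, a digon, or an arc or directed 2-path between `u` and `v`
    all_goals grind [OrientedGraph.irrefl, OrientedGraph.antisymm]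

/-- Merging `v` into `u` gives a colouring with fewer colours than vertices. -/
lemma IsAbsoluteClique.weakDistLeTwo [Finite V] (hG : G.IsAbsoluteClique) {u v : V}
    (hne : u ≠ v) : G.WeakDistLeTwo u v := by
  classical
  by_contra huv
  let merge : V → {w // w ≠ v} := fun w => if h : w = v then ⟨u, hne⟩ else ⟨w, h⟩
  have hmerge : ∀ a b, merge a = merge b → a = b ∨ (a = u ∧ b = v) ∨ (a = v ∧ b = u) := by
    intro a b hab
    simp only [merge] at hab
    split_ifs at hab <;> simp_all [Subtype.ext_iff]
  have hcol := isColoring_of_not_weakDistLeTwo (φ := Finite.equivFin _ ∘ merge) huv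
    (fun a b hab => hmerge a b ((Finite.equivFin _).injective hab))
  have hlt : Nat.card {w // w ≠ v} < Nat.card V := Finite.card_subtype_lt (not_not.2 rfl)
  have := chromNum_le_of_isColoring hcol
  rw [hG] at this
  omega

end OrientedGraph

lemma ZMod.neg_natCast_half {n : ℕ} (hn : Even n) :
    -((n / 2 : ℕ) : ZMod n) = (n / 2 : ℕ) := by
  refine neg_eq_of_add_eq_zero_left ?_
  rw [← Nat.cast_add, ← two_mul, Nat.mul_div_cancel' hn.two_dvd, ZMod.natCast_self]

lemma ZMod.natCast_half_ne_zero {n : ℕ} (hn : 2 ≤ n) : ((n / 2 : ℕ) : ZMod n) ≠ 0 := by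
  rw [Ne, ZMod.natCast_eq_zero_iff]
  intro hdvd
  have := Nat.le_of_dvd (by omega) hdvd
  omega

lemma circulant_weakDistLeTwo_zero {n : ℕ} {S : Set (ZMod n)}
    {hS : ∀ k : ZMod n, k ∈ S → -k ∉ S} {c : ZMod n} (hc : (circulant n S hS).WeakDistLeTwo 0 c) :
    c ∈ S ∨ -c ∈ S ∨ ∃ x ∈ S, ∃ y ∈ S, x + y = c ∨ x + y = -c := by
  rcases hc with h0c | hc0 | ⟨w, ⟨h0w, hwc⟩ | ⟨hcw, hw0⟩⟩
  · exact .inl (by simpa [circulant] using h0c)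
  · exact .inr (.inl (by simpa [circulant] using hc0))
  · exact .inr (.inr ⟨_, h0w, _, hwc, .inl (by ring)⟩)
  · exact .inr (.inr ⟨_, hcw, _, hw0, .inr (by ring)⟩)

/-- if `n` is even and the oriented circulant graph `C(n, S)` is an
absolute oriented clique, then `n/2 ∉ S` and there are `x, y ∈ S` with
`x + y ≡ ±n/2 (mod n)`. -/
theorem stmt19 (n : ℕ) (hn : 1 ≤ n) (hev : Even n) (S : Set (ZMod n))
    (hS : ∀ k : ZMod n, k ∈ S → -k ∉ S)
    (h : (circulant n S hS).IsAbsoluteClique) :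
    ((n / 2 : ℕ) : ZMod n) ∉ S ∧
    ∃ x ∈ S, ∃ y ∈ S,
      x + y = ((n / 2 : ℕ) : ZMod n) ∨ x + y = -((n / 2 : ℕ) : ZMod n) := by
  have hneg := ZMod.neg_natCast_half hev
  have hhalf : ((n / 2 : ℕ) : ZMod n) ∉ S := fun hm => hS _ hm (by rwa [hneg])
  have h2n : 2 ≤ n := by obtain ⟨k, rfl⟩ := hev; omega
  have : NeZero n := ⟨by omega⟩
  rcases circulant_weakDistLeTwo_zero
      (h.weakDistLeTwo (ZMod.natCast_half_ne_zero h2n).symm) with hm | hm | hsum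
  · exact absurd hm hhalf
  · exact absurd (hneg ▸ hm) hhalf
  · exact ⟨hhalf, hsum⟩
end
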